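/- arXiv:1606.01827 — 3 statements merged into one kernel-verified Lean document; each statement's English description precedes it below -/
import Mathlib

section
/- For q with q⁴ ≠ 1, the braiding R̂ on the tensor square of the adjoint representation of U_q(sl(2)) does not satisfy any quadratic polynomial relation: there exist no scalars a, b such that R̂² = a R̂ + b·id (equivalently, the minimal polynomial of R̂ has degree 3, since R̂ has three distinct eigenvalues q², −q^{-2}, q^{-4}). -/
open Matrix

/-- The braiding R̂ on the tensor square of the adjoint representation of U_q(sl(2)),
in the basis v₁, v₀, v₋₁ (indexed 0, 1, 2); column (a,b) is the image of v_a ⊗ v_b. -/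
noncomputable def Rhat (q : ℝ) : Matrix (Fin 3 × Fin 3) (Fin 3 × Fin 3) ℝ :=
  Matrix.single (0, 0) (0, 0) (q ^ 2)
  + Matrix.single (1, 0) (0, 1) 1
  + Matrix.single (0, 1) (0, 1) (q ^ 2 - q⁻¹ ^ 2)
  + Matrix.single (2, 0) (0, 2) (q⁻¹ ^ 2)
  + Matrix.single (0, 2) (0, 2) (q⁻¹ * (q - q⁻¹) * (q ^ 2 - q⁻¹ ^ 2))
  + Matrix.single (1, 1) (0, 2) (q ^ 2 - q⁻¹ ^ 2)
  + Matrix.single (0, 1) (1, 0) 1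
  + Matrix.single (1, 1) (1, 1) 1
  + Matrix.single (0, 2) (1, 1) (q⁻¹ ^ 2 * (q ^ 2 - q⁻¹ ^ 2))
  + Matrix.single (2, 1) (1, 2) 1
  + Matrix.single (1, 2) (1, 2) (q ^ 2 - q⁻¹ ^ 2)
  + Matrix.single (0, 2) (2, 0) (q⁻¹ ^ 2)
  + Matrix.single (1, 2) (2, 1) 1
  + Matrix.single (2, 2) (2, 2) (q ^ 2)

/-!
If R̂² = a R̂ + b, then every diagonal entry of R̂² at which R̂ itself vanishes equals `b`.
R̂ vanishes on the diagonal at v₀ ⊗ v₁ and at v₋₁ ⊗ v₁, and there R̂² has the entries `1` and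
`q⁻⁴` (R̂ swaps v₁ ⊗ v₀ ↔ v₀ ⊗ v₁ with weights `1, 1` and v₋₁ ⊗ v₁ ↔ v₁ ⊗ v₋₁ with weights
`q⁻², q⁻²`). Hence `q⁻⁴ = 1`, i.e. `q⁴ = 1`.
-/

theorem Matrix.mul_self_apply_diag_of_eq_smul_add_smul_one {n R : Type*} [Fintype n]
    [DecidableEq n] [CommRing R] {M : Matrix n n R} {a b : R}
    (h : M * M = a • M + b • (1 : Matrix n n R)) {i : n} (hi : M i i = 0) :
    (M * M) i i = b := by
  simp [h, hi]

section Rhat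

variable (q : ℝ)

theorem Rhat_apply_one_zero : Rhat q (1, 0) (1, 0) = 0 := by
  simp [Rhat, Matrix.single]

theorem Rhat_apply_two_zero : Rhat q (2, 0) (2, 0) = 0 := by
  simp [Rhat, Matrix.single]

theorem Rhat_mul_self_apply_one_zero : (Rhat q * Rhat q) (1, 0) (1, 0) = 1 := by
  simp [Rhat, Matrix.mul_apply, Matrix.single]

theorem Rhat_mul_self_apply_two_zero : (Rhat q * Rhat q) (2, 0) (2, 0) = q⁻¹ ^ 4 := by
  simp [Rhat, Matrix.mul_apply, Matrix.single]
  ring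

end Rhat

theorem stmt_6_general (q : ℝ) (hq4 : q ^ 4 ≠ 1) :
    ¬ ∃ a b : ℝ, Rhat q * Rhat q = a • Rhat q + b • (1 : Matrix (Fin 3 × Fin 3) (Fin 3 × Fin 3) ℝ) := by
  rintro ⟨a, b, h⟩
  have h₁ := mul_self_apply_diag_of_eq_smul_add_smul_one h (Rhat_apply_one_zero q)
  have h₂ := mul_self_apply_diag_of_eq_smul_add_smul_one h (Rhat_apply_two_zero q)
  rw [Rhat_mul_self_apply_one_zero] at h₁
  rw [Rhat_mul_self_apply_two_zero, ← h₁, inv_pow, inv_eq_one] at h₂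
  exact hq4 h₂

/-- For q⁴ ≠ 1 the braiding R̂ satisfies no quadratic polynomial relation:
there are no scalars a, b with R̂² = a R̂ + b·id. -/
theorem stmt_6 (q : ℝ) (hq : q ≠ 0) (hq4 : q ^ 4 ≠ 1) :
    ¬ ∃ a b : ℝ, Rhat q * Rhat q = a • Rhat q + b • (1 : Matrix (Fin 3 × Fin 3) (Fin 3 × Fin 3) ℝ) :=
  stmt_6_general q hq4
end

section
/- Let Γ_+, Γ_0, Γ_- be the contraction operators on the 8-dimensional graded space Λ_q(u_+) defined by the explicit matrices (in the ordered bases {1}, {v_1,v_0,v_{-1}}, {v_1∧v_0, v_1∧v_{-1}, v_0∧v_{-1}}, {v_1∧v_0∧v_{-1}}): Γ_+⁽¹⁾=(1 0 0), Γ_0⁽¹⁾=(0 1 0), Γ_-⁽¹⁾=(0 0 1); Γ_+⁽²⁾ has rows (0 0 0),(q^{-2} 0 0),(0 1 0); Γ_0⁽²⁾=diag(−1, −q(q−q^{-1}), q^{-2}); Γ_-⁽²⁾ has rows (0 −1 0),(0 0 −1),(0 0 0); Γ_+⁽³⁾=(0 0 q²)ᵀ, Γ_0⁽³⁾=(0 −q²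 0)ᵀ, Γ_-⁽³⁾=(q⁴ 0 0)ᵀ; and let adjoints be taken with respect to the inner product with Gram matrices M⁽⁰⁾=(1), M⁽¹⁾=diag(1,1,q²), M⁽²⁾=diag(1,q⁴,q²), M⁽³⁾=(1). Then for 0 < q < 1 there do NOT exist scalars t, t' and nonzero scalars c_0, c_1, c_2, c_3 such that for all degrees k ∈ {1, 2}: (c_{k+1}/c_k)·Γ_-⁽ᵏ⁺¹⁾ Γ_0⁽ᵏ⁺¹⁾* = (c_k/c_{k−1})·(t·Γ_0⁽ᵏ⁾* Γ_-⁽ᵏ⁾ + t'·Γ_+⁽ᵏ⁾* Γ_0⁽ᵏ⁾). -/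
open Matrix

noncomputable section

-- Contraction operators Γ₊ = γ₋(w₁), Γ₀ = γ₋(w₀), Γ₋ = γ₋(w₋₁) in the ordered bases
-- {1}, {v₁, v₀, v₋₁}, {v₁∧v₀, v₁∧v₋₁, v₀∧v₋₁}, {v₁∧v₀∧v₋₁}.

def Gp1 : Matrix (Fin 1) (Fin 3) ℝ := !![1, 0, 0]
def G01 : Matrix (Fin 1) (Fin 3) ℝ := !![0, 1, 0]
def Gm1 : Matrix (Fin 1) (Fin 3) ℝ := !![0, 0, 1]

def Gp2 (q : ℝ) : Matrix (Fin 3) (Fin 3) ℝ := !![0, 0, 0; q⁻¹ ^ 2, 0, 0; 0, 1, 0]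
def G02 (q : ℝ) : Matrix (Fin 3) (Fin 3) ℝ :=
  !![-1, 0, 0; 0, -(q * (q - q⁻¹)), 0; 0, 0, q⁻¹ ^ 2]
def Gm2 : Matrix (Fin 3) (Fin 3) ℝ := !![0, -1, 0; 0, 0, -1; 0, 0, 0]

def Gp3 (q : ℝ) : Matrix (Fin 3) (Fin 1) ℝ := !![0; 0; q ^ 2]
def G03 (q : ℝ) : Matrix (Fin 3) (Fin 1) ℝ := !![0; -q ^ 2; 0]
def Gm3 (q : ℝ) : Matrix (Fin 3) (Fin 1) ℝ := !![q ^ 4; 0; 0]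

-- Gram matrices of the invariant inner product in each degree.
def M0 : Matrix (Fin 1) (Fin 1) ℝ := 1
def M1 (q : ℝ) : Matrix (Fin 3) (Fin 3) ℝ := diagonal ![1, 1, q ^ 2]
def M2 (q : ℝ) : Matrix (Fin 3) (Fin 3) ℝ := diagonal ![1, q ^ 4, q ^ 2]
def M3 : Matrix (Fin 1) (Fin 1) ℝ := 1

/-! Only three matrix entries matter. Write `s = c₂/c₁`, `r = c₁/c₀`. The `(0,1)` and `(1,2)`
entries of the degree-one identity give `r t' q⁴ = s (q² - 1)` and `r t q² = -s`, while the
`(1,2)` entry of the degree-two identity, whose left side vanishes, gives `t' = (1 - q²) t`.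
Together they force `s (q² - 1)² = 0`, impossible for `s ≠ 0` and `q² ≠ 1`. -/

variable {q : ℝ}

lemma M1_inv (hq : q ≠ 0) : (M1 q)⁻¹ = diagonal ![1, 1, (q ^ 2)⁻¹] := by
  refine inv_eq_right_inv ?_
  rw [M1, diagonal_mul_diagonal, ← diagonal_one]
  congr 1
  ext i; fin_cases i <;> simp [hq]

lemma M2_inv (hq : q ≠ 0) : (M2 q)⁻¹ = diagonal ![1, (q ^ 4)⁻¹, (q ^ 2)⁻¹] := by
  refine inv_eq_right_inv ?_
  rw [M2, diagonal_mul_diagonal, ← diagonal_one]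
  congr 1
  ext i; fin_cases i <;> simp [hq]

lemma Gp1_adjoint (hq : q ≠ 0) : (M1 q)⁻¹ * Gp1ᴴ * M0 = !![1; 0; 0] := by
  rw [M1_inv hq]
  ext i j; fin_cases i <;> fin_cases j <;> simp [Gp1, M0, mul_apply, Fin.sum_univ_succ]

lemma G01_adjoint (hq : q ≠ 0) : (M1 q)⁻¹ * G01ᴴ * M0 = !![0; 1; 0] := by
  rw [M1_inv hq]
  ext i j; fin_cases i <;> fin_cases j <;> simp [G01, M0, mul_apply, Fin.sum_univ_succ]

lemma G02_adjoint (hq : q ≠ 0) :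
    (M2 q)⁻¹ * (G02 q)ᴴ * M1 q = diagonal ![-1, (1 - q ^ 2) / q ^ 4, (q ^ 2)⁻¹] := by
  rw [M2_inv hq]
  ext i j
  fin_cases i <;> fin_cases j <;> simp [G02, M1, mul_apply, Fin.sum_univ_succ] <;> field

lemma Gp2_adjoint (hq : q ≠ 0) :
    (M2 q)⁻¹ * (Gp2 q)ᴴ * M1 q = !![0, (q ^ 2)⁻¹, 0; 0, 0, (q ^ 2)⁻¹; 0, 0, 0] := by
  rw [M2_inv hq]
  ext i j
  fin_cases i <;> fin_cases j <;> simp [Gp2, M1, mul_apply, Fin.sum_univ_succ]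
  field

lemma G03_adjoint : M3⁻¹ * (G03 q)ᴴ * M2 q = !![0, -q ^ 6, 0] := by
  ext i j
  fin_cases j <;> simp [G03, M2, M3, mul_apply, Fin.sum_univ_succ]
  ring

lemma degree_one_relations (hq : q ≠ 0) {a b t t' : ℝ}
    (h : a • (Gm2 * ((M2 q)⁻¹ * (G02 q)ᴴ * M1 q)) =
      b • (t • (((M1 q)⁻¹ * G01ᴴ * M0) * Gm1) + t' • (((M1 q)⁻¹ * Gp1ᴴ * M0) * G01))) :
    a * (q ^ 2 - 1) = b * t' * q ^ 4 ∧ -a = b * t * q ^ 2 := by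
  rw [G02_adjoint hq, G01_adjoint hq, Gp1_adjoint hq] at h
  have h01 : -(a * ((1 - q ^ 2) / q ^ 4)) = b * t' := by
    simpa [Gm2, Gm1, G01, vecMul, dotProduct, Fin.sum_univ_succ] using congrFun (congrFun h 0) 1
  have h12 : -(a * (q ^ 2)⁻¹) = b * t := by
    simpa [Gm2, Gm1, G01, vecMul, dotProduct, Fin.sum_univ_succ] using congrFun (congrFun h 1) 2
  field_simp at h01 h12
  constructor
  · linear_combination h01
  · linear_combination h12

lemma degree_two_relation (hq : q ≠ 0) {a b t t' : ℝ} (hb : b ≠ 0)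
    (h : a • (Gm3 q * (M3⁻¹ * (G03 q)ᴴ * M2 q)) =
      b • (t • (((M2 q)⁻¹ * (G02 q)ᴴ * M1 q) * Gm2) + t' • (((M2 q)⁻¹ * (Gp2 q)ᴴ * M1 q) * G02 q))) :
    t * (q ^ 2 - 1) + t' = 0 := by
  rw [G03_adjoint, G02_adjoint hq, Gp2_adjoint hq] at h
  have h12 : b = 0 ∨ -(t * ((1 - q ^ 2) / q ^ 4)) + t' * ((q ^ 2)⁻¹ * (q ^ 2)⁻¹) = 0 := by
    simpa [Gm3, Gm2, G02, mul_apply, Fin.sum_univ_succ] using congrFun (congrFun h 1) 2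
  replace h12 := h12.resolve_left hb
  field_simp at h12
  linear_combination h12

lemma eq_zero_of_relations {s r t t' : ℝ} (hq2 : q ^ 2 ≠ 1)
    (e1 : s * (q ^ 2 - 1) = r * t' * q ^ 4) (e2 : -s = r * t * q ^ 2)
    (e3 : t * (q ^ 2 - 1) + t' = 0) : s = 0 := by
  have : s * (q ^ 2 - 1) ^ 2 = 0 := by
    linear_combination -e1 - q ^ 2 * (q ^ 2 - 1) * e2 - r * q ^ 4 * e3
  simpa [sub_eq_zero, hq2] using this

/-- For 0 < q < 1 there do not exist scalars t, t' and nonzero rescaling constants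
c₀, c₁, c₂, c₃ such that for k ∈ {1,2}:
(c_{k+1}/c_k)·Γ₋⁽ᵏ⁺¹⁾ Γ₀⁽ᵏ⁺¹⁾* = (c_k/c_{k−1})·(t·Γ₀⁽ᵏ⁾* Γ₋⁽ᵏ⁾ + t'·Γ₊⁽ᵏ⁾* Γ₀⁽ᵏ⁾),
where the adjoints are T⁽ᵏ⁾* = (M⁽ᵏ⁾)⁻¹ (T⁽ᵏ⁾)† M⁽ᵏ⁻¹⁾. -/
theorem stmt_17 (q : ℝ) (hq0 : 0 < q) (hq1 : q < 1) :
    ¬ ∃ t t' c0 c1 c2 c3 : ℝ, c0 ≠ 0 ∧ c1 ≠ 0 ∧ c2 ≠ 0 ∧ c3 ≠ 0 ∧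
      (c2 / c1) • (Gm2 * ((M2 q)⁻¹ * (G02 q)ᴴ * M1 q)) =
        (c1 / c0) • (t • (((M1 q)⁻¹ * G01ᴴ * M0) * Gm1)
          + t' • (((M1 q)⁻¹ * Gp1ᴴ * M0) * G01)) ∧
      (c3 / c2) • (Gm3 q * (M3⁻¹ * (G03 q)ᴴ * M2 q)) =
        (c2 / c1) • (t • (((M2 q)⁻¹ * (G02 q)ᴴ * M1 q) * Gm2)
          + t' • (((M2 q)⁻¹ * (Gp2 q)ᴴ * M1 q) * G02 q)) := by
  rintro ⟨t, t', c0, c1, c2, c3, -, hc1, hc2, -, h1, h2⟩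
  have hq : q ≠ 0 := hq0.ne'
  have hq2 : q ^ 2 ≠ 1 := (pow_lt_one₀ hq0.le hq1 two_ne_zero).ne
  have hs : c2 / c1 ≠ 0 := div_ne_zero hc2 hc1
  obtain ⟨e1, e2⟩ := degree_one_relations hq h1
  exact hs (eq_zero_of_relations hq2 e1 e2 (degree_two_relation hq hs h2))
end
end

section
/- With the explicit matrices for Γ_-, Γ_0, Γ_+ and their adjoints in degree 1 and 2 as above, the relation Γ_-⁽²⁾Γ_0⁽²⁾* = λ(t Γ_0⁽¹⁾*Γ_-⁽¹⁾ + t' Γ_+⁽¹⁾*Γ_0⁽¹⁾) forces t' = λ^{-1}q^{-3}(q−q^{-1}) and t = −λ^{-1}q^{-2} for the scaling factor λ; and substituting these values, the degree-2 equation component tq(q−q^{-1}) + t' = 0 reduces to q^{-2}(q−q^{-1})(q^{-1}−q) = 0, which has a solution only when q = ±1. -/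
open Matrix

noncomputable section

def G02star (q : ℝ) : Matrix (Fin 3) (Fin 3) ℝ :=
  !![-1, 0, 0; 0, -(q⁻¹ ^ 3 * (q - q⁻¹)), 0; 0, 0, q⁻¹ ^ 2]
def G01star : Matrix (Fin 3) (Fin 1) ℝ := !![0; 1; 0]
def Gp1star : Matrix (Fin 3) (Fin 1) ℝ := !![1; 0; 0]
/-- The degree-1 relation Γ₋⁽²⁾Γ₀⁽²⁾* = λ(t Γ₀⁽¹⁾*Γ₋⁽¹⁾ + t' Γ₊⁽¹⁾*Γ₀⁽¹⁾) forces
t' = λ⁻¹q⁻³(q−q⁻¹) and t = −λ⁻¹q⁻², and with these values the degree-2 equation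
component t·q(q−q⁻¹) + t' = 0 has a solution only for q = ±1. -/
theorem stmt_18 (q : ℝ) (hq : 0 < q) (lam : ℝ) (hlam : lam ≠ 0) (t t' : ℝ)
    (heq : Gm2 * G02star q =
      lam • (t • (G01star * Gm1) + t' • (Gp1star * G01))) :
    t' = lam⁻¹ * (q⁻¹ ^ 3 * (q - q⁻¹)) ∧
    t = -(lam⁻¹ * q⁻¹ ^ 2) ∧
    (t * q * (q - q⁻¹) + t' = 0 → q = 1 ∨ q = -1) := by
  have h01 := congrFun (congrFun heq 0) 1
  have h12 := congrFun (congrFun heq 1) 2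
  simp [Gm2, G02star, G01star, Gm1, Gp1star, G01, Matrix.mul_apply, Fin.sum_univ_succ] at h01 h12
  have ht' : t' = lam⁻¹ * (q⁻¹ ^ 3 * (q - q⁻¹)) := by
    field_simp at h01 ⊢; linarith [h01]
  have ht : t = -(lam⁻¹ * q⁻¹ ^ 2) := by
    field_simp at h12 ⊢; linarith [h12]
  refine ⟨ht', ht, fun h => ?_⟩
  subst ht ht'
  have hq0 : q ≠ 0 := ne_of_gt hq
  left
  field_simp at h
  have key : lam * q ^ 3 * (q * q - 1) ^ 2 = 0 := by linear_combination (-lam * q ^ 3) * h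
  have h2 : q * q - 1 = 0 := by
    rcases mul_eq_zero.mp key with h' | h'
    · exact absurd h' (by positivity)
    · exact pow_eq_zero_iff (n := 2) (by norm_num) |>.mp h'
  nlinarith [h2, hq]
end
end
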